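/- arXiv:math/9801015 — 4 statements merged into one kernel-verified Lean document; each statement's English description precedes it below -/
import Mathlib

section
/- Let X be a proper metric space and let Γ be a group acting on X by isometries, properly discontinuously and cocompactly. Then every element γ ∈ Γ is semisimple, i.e. its displacement function attains its infimum: there exists a point x ∈ X such that dist(x, γ•x) = ⨅_{y ∈ X} dist(y, γ•y). -/
/-!
Displacement is conjugation-equivariant: `dist (g • k) (γ • g • k) = dist k ((g⁻¹ γ g) • k)`.
By cocompactness every point is `g • k` with `k` in a compact `K`, and if its displacement is at
most `D`, the conjugate `g⁻¹ γ g` moves a point of `K` into the compact set `cthickening D K`;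
by proper discontinuity only finitely many conjugates do so. Choosing one `g` for each of them,
all displacement values `≤ D` are already taken on the compact set `⋃ g, g • K`, where the
continuous displacement function attains its minimum.
-/

open Pointwise Set Metric

theorem IsCompact.exists_forall_le_of_forall_exists_le {α β : Type*} [TopologicalSpace α]
    [LinearOrder β] [TopologicalSpace β] [ClosedIicTopology β] {f : α → β} {C : Set α}
    (hC : IsCompact C) (hf : ContinuousOn f C) (x₀ : α)
    (h : ∀ y, f y ≤ f x₀ → ∃ z ∈ C, f z ≤ f y) : ∃ x, ∀ y, f x ≤ f y := by
  obtain ⟨z₀, hz₀C, hz₀⟩ := h x₀ le_rfl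
  obtain ⟨x, hxC, hx⟩ := hC.exists_isMinOn ⟨z₀, hz₀C⟩ hf
  refine ⟨x, fun y => ?_⟩
  rcases le_total (f y) (f x₀) with hy | hy
  · obtain ⟨z, hzC, hz⟩ := h y hy
    exact (hx hzC).trans hz
  · exact ((hx hz₀C).trans hz₀).trans hy

section Displacement

variable {Γ X : Type*} [PseudoMetricSpace X]

def displacement [SMul Γ X] (γ : Γ) (x : X) : ℝ :=
  dist x (γ • x)

theorem continuous_displacement [SMul Γ X] [IsIsometricSMul Γ X] (γ : Γ) :
    Continuous (displacement γ : X → ℝ) :=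
  continuous_id.dist (continuous_const_smul γ)

theorem displacement_smul [Group Γ] [MulAction Γ X] [IsIsometricSMul Γ X] (γ g : Γ) (x : X) :
    displacement γ (g • x) = displacement (g⁻¹ * γ * g) x := by
  rw [displacement, displacement, ← dist_smul g x, smul_smul g, mul_assoc, mul_inv_cancel_left,
    smul_smul]

theorem finite_setOf_exists_displacement_le [SMul Γ X] [ProperSpace X]
    [ProperlyDiscontinuousSMul Γ X] {K : Set X} (hK : IsCompact K) (D : ℝ) :
    {h : Γ | ∃ k ∈ K, displacement h k ≤ D}.Finite :=
  (ProperlyDiscontinuousSMul.finite_disjoint_inter_image hK hK.cthickening).subset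
    fun _ ⟨k, hk, hkD⟩ =>
      ⟨_, mem_image_of_mem _ hk, mem_cthickening_of_dist_le _ k _ _ hk (by rwa [dist_comm])⟩

theorem exists_isCompact_forall_displacement_le_exists_eq [Group Γ] [MulAction Γ X]
    [ProperSpace X] [ProperlyDiscontinuousSMul Γ X] [IsIsometricSMul Γ X] {K : Set X}
    (hK : IsCompact K) (hcover : ⋃ g : Γ, g • K = univ) (γ : Γ) (D : ℝ) :
    ∃ C : Set X, IsCompact C ∧
      ∀ y : X, displacement γ y ≤ D → ∃ z ∈ C, displacement γ z = displacement γ y := by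
  set conj : Γ → Γ := fun g => g⁻¹ * γ * g
  set T := {g : Γ | ∃ k ∈ K, displacement (conj g) k ≤ D}
  have hfin : (conj '' T).Finite :=
    (finite_setOf_exists_displacement_le hK D).subset (image_subset_iff.2 fun _ hg => hg)
  obtain ⟨u, -, hu, hconj⟩ := exists_subset_image_finite_and.1 ⟨_, subset_rfl, hfin, rfl⟩
  refine ⟨⋃ g ∈ u, g • K, hu.isCompact_biUnion fun g _ => hK.smul g, fun y hy => ?_⟩
  obtain ⟨g, hyg⟩ := mem_iUnion.1 (hcover ▸ mem_univ y)
  obtain ⟨k, hk, rfl⟩ := mem_smul_set.1 hyg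
  rw [displacement_smul] at hy
  obtain ⟨g', hg'u, hg'⟩ : conj g ∈ conj '' u := hconj ▸ ⟨g, ⟨k, hk, hy⟩, rfl⟩
  refine ⟨g' • k, mem_biUnion hg'u (smul_mem_smul_set hk), ?_⟩
  rw [displacement_smul, displacement_smul]
  exact congrArg (displacement · k) hg'

end Displacement

/-- Let `X` be a proper metric space and let `Γ` be a group acting on `X`
by isometries, properly discontinuously and cocompactly. Then every element `γ ∈ Γ` is
semisimple: its displacement function attains its infimum. -/
theorem every_element_semisimple
    {X : Type*} [MetricSpace X] [ProperSpace X] [Nonempty X]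
    {Γ : Type*} [Group Γ] [MulAction Γ X]
    (hiso : ∀ (γ : Γ) (x y : X), dist (γ • x) (γ • y) = dist x y)
    (hpd : ∀ K L : Set X, IsCompact K → IsCompact L →
      {γ : Γ | (γ • K) ∩ L ≠ ∅}.Finite)
    (hcc : ∃ K : Set X, IsCompact K ∧ ⋃ γ : Γ, γ • K = Set.univ)
    (γ : Γ) :
    ∃ x : X, dist x (γ • x) = ⨅ y : X, dist y (γ • y) := by
  have : IsIsometricSMul Γ X := ⟨fun g => Isometry.of_dist_eq (hiso g)⟩
  have : ProperlyDiscontinuousSMul Γ X :=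
    ⟨fun hK hL => (hpd _ _ hK hL).subset fun _ => nonempty_iff_ne_empty.1⟩
  obtain ⟨K, hK, hcover⟩ := hcc
  obtain ⟨x₀⟩ := ‹Nonempty X›
  obtain ⟨C, hC, hCD⟩ :=
    exists_isCompact_forall_displacement_le_exists_eq hK hcover γ (displacement γ x₀)
  obtain ⟨x, hx⟩ := hC.exists_forall_le_of_forall_exists_le
    (continuous_displacement γ).continuousOn x₀ fun y hy =>
      (hCD y hy).imp fun _ hz => ⟨hz.1, hz.2.le⟩
  exact ⟨x, (IsLeast.csInf_eq ⟨mem_range_self x, forall_mem_range.2 hx⟩).symm⟩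
end

section
/- Let X be a proper metric space and let Γ be a group acting on X by isometries, properly discontinuously and cocompactly. Let A be a finitely generated abelian subgroup of Γ. Then the centralizer C(A) of A in Γ acts cocompactly on MIN(A): there exists a compact set K ⊆ X such that MIN(A) ⊆ ⋃_{γ ∈ C(A)} γ•K. -/
open Pointwise

/-- Let `X` be a proper metric space and let `Γ` be a group acting on `X`
by isometries, properly discontinuously and cocompactly. Let `A` be a finitely generated
abelian subgroup of `Γ`. Then the centralizer `C(A)` of `A` in `Γ` acts cocompactly on
`MIN(A) = ⋂ a ∈ A, {x | dist x (a • x) = ⨅ y, dist y (a • y)}`. -/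
theorem centralizer_acts_cocompactly_on_min
    {X : Type*} [MetricSpace X] [ProperSpace X]
    {Γ : Type*} [Group Γ] [MulAction Γ X]
    (hiso : ∀ (γ : Γ) (x y : X), dist (γ • x) (γ • y) = dist x y)
    (hpd : ∀ K L : Set X, IsCompact K → IsCompact L →
      {γ : Γ | (γ • K) ∩ L ≠ ∅}.Finite)
    (hcc : ∃ K : Set X, IsCompact K ∧ ⋃ γ : Γ, γ • K = Set.univ)
    (A : Subgroup Γ) (hfg : A.FG) (habel : ∀ a ∈ A, ∀ b ∈ A, a * b = b * a) :
    ∃ K : Set X, IsCompact K ∧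
      (⋂ a ∈ A, {x : X | dist x (a • x) = ⨅ y : X, dist y (a • y)}) ⊆
        ⋃ γ ∈ Subgroup.centralizer (A : Set Γ), γ • K := by
  classical
  obtain ⟨K₀, hK₀c, hK₀cov⟩ := hcc
  set M : Set X := ⋂ a ∈ A, {x : X | dist x (a • x) = ⨅ y : X, dist y (a • y)} with hM
  by_cases hMne : M.Nonempty
  swap
  · refine ⟨∅, isCompact_empty, ?_⟩
    rw [Set.not_nonempty_iff_eq_empty] at hMne
    rw [hMne]
    exact Set.empty_subset _
  obtain ⟨xb, hxb⟩ := hMne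
  have hmemM : ∀ x ∈ M, ∀ a ∈ A, dist x (a • x) = ⨅ y : X, dist y (a • y) := by
    intro x hx a ha
    simp only [hM, Set.mem_iInter, Set.mem_setOf_eq] at hx
    exact hx a ha
  obtain ⟨S, hSA⟩ := hfg
  have hSsub : (S : Set Γ) ⊆ (A : Set Γ) := hSA ▸ Subgroup.subset_closure
  have hdisp : ∀ x ∈ M, ∀ s ∈ S, dist x (s • x) = dist xb (s • xb) := fun x hx s hs =>
    (hmemM x hx s (hSsub hs)).trans (hmemM xb hxb s (hSsub hs)).symm
  set D : ℝ := ∑ s ∈ S, dist xb (s • xb) with hD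
  have hD0 : 0 ≤ D := Finset.sum_nonneg fun s _ => dist_nonneg
  have hDle : ∀ s ∈ S, dist xb (s • xb) ≤ D := fun s hs =>
    Finset.single_le_sum (f := fun t => dist xb (t • xb)) (fun t _ => dist_nonneg) hs
  obtain ⟨R, hR⟩ := hK₀c.isBounded.subset_closedBall xb
  set K₁ : Set X := Metric.closedBall xb (R + D) with hK₁
  have hK₁c : IsCompact K₁ := isCompact_closedBall _ _
  have hK₀K₁ : K₀ ⊆ K₁ := by
    intro y hy
    have h1 : dist y xb ≤ R := hR hy
    show y ∈ Metric.closedBall xb (R + D)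
    simp only [Metric.mem_closedBall]
    linarith
  have hF : {γ : Γ | (γ • K₁) ∩ K₁ ≠ ∅}.Finite := hpd K₁ K₁ hK₁c hK₁c
  have hcov : ∀ x : X, ∃ γ : Γ, γ⁻¹ • x ∈ K₀ := by
    intro x
    have hx : x ∈ ⋃ γ : Γ, γ • K₀ := hK₀cov ▸ Set.mem_univ x
    obtain ⟨γ, hγ⟩ := Set.mem_iUnion.mp hx
    exact ⟨γ, Set.mem_smul_set_iff_inv_smul_mem.mp hγ⟩
  choose g hg using hcov
  set φ : X → (↑S → Γ) := fun x s => (g x)⁻¹ * ↑s * g x with hφ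
  -- each conjugate lies in the finite set F
  have hφF : ∀ x ∈ M, ∀ s : ↑S, φ x s ∈ {γ : Γ | (γ • K₁) ∩ K₁ ≠ ∅} := by
    intro x hx s
    set y : X := (g x)⁻¹ • x with hy
    have hyK₀ : y ∈ K₀ := hg x
    have hact : φ x s • y = (g x)⁻¹ • ((s : Γ) • x) := by
      simp only [hφ, hy, smul_smul]
      congr 1
      group
    have hdy : dist y (φ x s • y) = dist xb ((s : Γ) • xb) := by
      rw [hact, hy, hiso]
      exact hdisp x hx s s.2
    have hyK₁ : y ∈ K₁ := hK₀K₁ hyK₀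
    have hy2K₁ : φ x s • y ∈ K₁ := by
      simp only [hK₁, Metric.mem_closedBall] at hyK₁ ⊢
      have h1 : dist (φ x s • y) xb ≤ dist (φ x s • y) y + dist y xb := dist_triangle _ _ _
      have h2 : dist (φ x s • y) y ≤ D := by
        rw [dist_comm, hdy]; exact hDle s s.2
      have h3 : dist y xb ≤ R := by
        have := hR hyK₀; simpa [Metric.mem_closedBall] using this
      linarith
    show (φ x s • K₁) ∩ K₁ ≠ ∅
    rw [← Set.nonempty_iff_ne_empty]
    exact ⟨φ x s • y, ⟨y, hyK₁, rfl⟩, hy2K₁⟩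
  -- the image of M under φ is finite
  have hVfin : (φ '' M).Finite := by
    apply Set.Finite.subset (Set.Finite.pi' fun _ : ↑S => hF)
    rintro f ⟨x, hx, rfl⟩
    exact fun s => hφF x hx s
  have hrep : ∀ v : ↑S → Γ, ∃ x : X, v ∈ φ '' M → x ∈ M ∧ φ x = v := by
    intro v
    by_cases h : v ∈ φ '' M
    · obtain ⟨x, hx, hxv⟩ := h
      exact ⟨x, fun _ => ⟨hx, hxv⟩⟩
    · exact ⟨xb, fun h' => absurd h' h⟩
  choose rep hrep using hrep
  refine ⟨⋃ v ∈ φ '' M, g (rep v) • K₀, ?_, ?_⟩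
  · apply hVfin.isCompact_biUnion
    intro v _
    have hisom : Isometry (fun z : X => g (rep v) • z) := Isometry.of_dist_eq (hiso _)
    have : g (rep v) • K₀ = (fun z : X => g (rep v) • z) '' K₀ := rfl
    rw [this]
    exact hK₀c.image hisom.continuous
  · intro x hx
    have hv : φ x ∈ φ '' M := ⟨x, hx, rfl⟩
    set b : Γ := g (rep (φ x)) with hb
    set c : Γ := g x * b⁻¹ with hc
    have hcomm : ∀ s ∈ S, c * s = s * c := by
      intro s hs
      have h1 : b⁻¹ * s * b = (g x)⁻¹ * s * g x := by
        have := congrFun ((hrep (φ x) hv).2) ⟨s, hs⟩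
        simpa only [hφ, hb] using this
      show g x * b⁻¹ * s = s * (g x * b⁻¹)
      calc g x * b⁻¹ * s = g x * (b⁻¹ * s * b) * b⁻¹ := by group
        _ = g x * ((g x)⁻¹ * s * g x) * b⁻¹ := by rw [h1]
        _ = s * (g x * b⁻¹) := by group
    have hcmem : c ∈ Subgroup.centralizer (A : Set Γ) := by
      have hAle : A ≤ Subgroup.centralizer {c} := by
        rw [← hSA, Subgroup.closure_le]
        intro s hs
        rw [SetLike.mem_coe, Subgroup.mem_centralizer_iff]
        intro t ht
        rw [Set.mem_singleton_iff] at ht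
        rw [ht]
        exact hcomm s hs
      rw [Subgroup.mem_centralizer_iff]
      intro a ha
      have := hAle ha
      rw [Subgroup.mem_centralizer_iff] at this
      exact (this c (Set.mem_singleton c)).symm
    refine Set.mem_biUnion hcmem ?_
    refine ⟨b • ((g x)⁻¹ • x), ?_, ?_⟩
    · exact Set.mem_biUnion hv ⟨(g x)⁻¹ • x, hg x, rfl⟩
    · show c • (b • (g x)⁻¹ • x) = x
      rw [smul_smul, smul_smul]
      have hone : c * b * (g x)⁻¹ = 1 := by
        show g x * b⁻¹ * b * (g x)⁻¹ = 1
        group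
      rw [hone, one_smul]
end

section
/- Let X be a proper metric space and let Γ be a group acting on X by isometries and properly discontinuously. Let C₁, C₂ ⊆ X be closed subsets and let Γᵢ := {γ ∈ Γ : γ•Cᵢ = Cᵢ} be their setwise stabilizers. If Γ₁ acts cocompactly on C₁ and Γ₂ acts cocompactly on C₂, then Γ₁ ∩ Γ₂ acts cocompactly on C₁ ∩ C₂: there exists a compact set K ⊆ X with C₁ ∩ C₂ ⊆ ⋃_{γ ∈ Γ₁ ∩ Γ₂} γ•K. -/
open Pointwise

/-- Let `X` be a proper metric space and let `Γ` be a group acting on `X`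
by isometries and properly discontinuously. Let `C₁, C₂ ⊆ X` be closed subsets whose
setwise stabilizers `Γ₁, Γ₂` act cocompactly on `C₁, C₂` respectively. Then `Γ₁ ∩ Γ₂`
acts cocompactly on `C₁ ∩ C₂`. -/
theorem stabilizers_inter_acts_cocompactly
    {X : Type*} [MetricSpace X] [ProperSpace X]
    {Γ : Type*} [Group Γ] [MulAction Γ X]
    (hiso : ∀ (γ : Γ) (x y : X), dist (γ • x) (γ • y) = dist x y)
    (hpd : ∀ K L : Set X, IsCompact K → IsCompact L →
      {γ : Γ | (γ • K) ∩ L ≠ ∅}.Finite)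
    (C₁ C₂ : Set X) (hC₁ : IsClosed C₁) (hC₂ : IsClosed C₂)
    (hcc₁ : ∃ K : Set X, IsCompact K ∧
      C₁ ⊆ ⋃ γ ∈ {γ : Γ | γ • C₁ = C₁}, γ • K)
    (hcc₂ : ∃ K : Set X, IsCompact K ∧
      C₂ ⊆ ⋃ γ ∈ {γ : Γ | γ • C₂ = C₂}, γ • K) :
    ∃ K : Set X, IsCompact K ∧
      C₁ ∩ C₂ ⊆ ⋃ γ ∈ {γ : Γ | γ • C₁ = C₁} ∩ {γ : Γ | γ • C₂ = C₂}, γ • K := by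
  classical
  obtain ⟨K₁, hK₁c, hK₁⟩ := hcc₁
  obtain ⟨K₂, hK₂c, hK₂⟩ := hcc₂
  rcases Set.eq_empty_or_nonempty (C₁ ∩ C₂) with hE | ⟨x₀, hx₀⟩
  · exact ⟨∅, isCompact_empty, by simp [hE]⟩
  -- the finite set from proper discontinuity
  have hF : {h : Γ | (h • K₂) ∩ K₁ ≠ ∅}.Finite := hpd K₂ K₁ hK₂c hK₁c
  -- witness predicate
  set Q : Γ → Prop := fun h =>
    ∃ (x : X) (γ : Γ), x ∈ C₁ ∩ C₂ ∧ γ • C₁ = C₁ ∧ γ⁻¹ • x ∈ K₁ ∧ γ⁻¹ • C₂ = h • C₂ with hQdef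
  let xsel : Γ → X := fun h => if hh : Q h then hh.choose else x₀
  let γsel : Γ → Γ := fun h => if hh : Q h then hh.choose_spec.choose else 1
  have hsel : ∀ h, Q h → (xsel h) ∈ C₁ ∩ C₂ ∧ (γsel h) • C₁ = C₁ ∧
      (γsel h)⁻¹ • (xsel h) ∈ K₁ ∧ (γsel h)⁻¹ • C₂ = h • C₂ := by
    intro h hh
    simp only [xsel, γsel, dif_pos hh]
    exact hh.choose_spec.choose_spec
  -- the compact set
  refine ⟨⋃ h ∈ hF.toFinset, (γsel h) • K₁, ?_, ?_⟩
  · apply (hF.toFinset : Finset Γ).finite_toSet.isCompact_biUnion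
    intro h _
    have : Continuous fun x : X => (γsel h) • x :=
      (Isometry.of_dist_eq fun x y => hiso _ x y).continuous
    simpa [Set.image_smul] using hK₁c.image this
  · rintro x ⟨hx1, hx2⟩
    -- get γ ∈ Γ₁ with γ⁻¹ • x ∈ K₁
    obtain ⟨γ, hγ₁, hxγ⟩ := Set.mem_iUnion₂.1 (hK₁ hx1)
    have hγ₁ : γ • C₁ = C₁ := hγ₁
    rw [Set.mem_smul_set_iff_inv_smul_mem] at hxγ
    -- get δ ∈ Γ₂ with δ⁻¹ • x ∈ K₂
    obtain ⟨δ, hδ₂, hxδ⟩ := Set.mem_iUnion₂.1 (hK₂ hx2)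
    have hδ₂ : δ • C₂ = C₂ := hδ₂
    rw [Set.mem_smul_set_iff_inv_smul_mem] at hxδ
    set h : Γ := γ⁻¹ * δ with hh
    have hhF : h ∈ hF.toFinset := by
      rw [Set.Finite.mem_toFinset]
      refine Set.nonempty_iff_ne_empty.1 ⟨γ⁻¹ • x, ?_, hxγ⟩
      refine ⟨δ⁻¹ • x, hxδ, ?_⟩
      simp [hh, mul_smul]
    have hQh : Q h := by
      refine ⟨x, γ, ⟨hx1, hx2⟩, hγ₁, hxγ, ?_⟩
      rw [hh, mul_smul, hδ₂]
    obtain ⟨⟨hxs1, hxs2⟩, hγs₁, hγsK, hγsC₂⟩ := hsel h hQh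
    set g : Γ := γ * (γsel h)⁻¹ with hg
    refine Set.mem_iUnion₂.2 ⟨g, ⟨?_, ?_⟩, ?_⟩
    · -- g • C₁ = C₁
      have : (γsel h)⁻¹ • C₁ = C₁ := by
        conv_lhs => rw [← hγs₁]
        rw [inv_smul_smul]
      show g • C₁ = C₁
      rw [hg, mul_smul, this, hγ₁]
    · -- g • C₂ = C₂
      have h1 : γ⁻¹ • C₂ = h • C₂ := by rw [hh, mul_smul, hδ₂]
      show g • C₂ = C₂
      rw [hg, mul_smul, hγsC₂, ← h1, smul_inv_smul]
    · -- x ∈ g • K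
      rw [Set.mem_smul_set_iff_inv_smul_mem]
      refine Set.mem_biUnion hhF ?_
      rw [Set.mem_smul_set_iff_inv_smul_mem]
      have : (γsel h)⁻¹ • g⁻¹ • x = γ⁻¹ • x := by
        rw [hg, ← mul_smul]
        congr 1
        group
      rw [this]
      exact hxγ
end

section
/- Let X be a locally compact Hausdorff topological space and let Γ be a group acting on X by homeomorphisms (i.e. the action is continuous) and properly discontinuously. Let C₁, C₂ ⊆ X be closed subsets and let Γᵢ := {γ ∈ Γ : γ•Cᵢ = Cᵢ} be their setwise stabilizers. If Γ₁ acts cocompactly on C₁ and Γ₂ acts cocompactly on C₂, then Γ₁ ∩ Γ₂ acts cocompactly on C₁ ∩ C₂: there exists a compact set K ⊆ X with C₁ ∩ C₂ ⊆ ⋃_{γ ∈ Γ₁ ∩ Γ₂} γ•K. -/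
open Pointwise

/-- Let `X` be a locally compact Hausdorff topological space and let `Γ`
be a group acting on `X` by homeomorphisms (continuously) and properly discontinuously.
Let `C₁, C₂ ⊆ X` be closed subsets whose setwise stabilizers `Γ₁, Γ₂` act cocompactly on
`C₁, C₂` respectively. Then `Γ₁ ∩ Γ₂` acts cocompactly on `C₁ ∩ C₂`. -/
theorem stabilizers_inter_acts_cocompactly_topological
    {X : Type*} [TopologicalSpace X] [LocallyCompactSpace X] [T2Space X]
    {Γ : Type*} [Group Γ] [MulAction Γ X]
    (hcont : ∀ γ : Γ, Continuous fun x : X => γ • x)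
    (hpd : ∀ K L : Set X, IsCompact K → IsCompact L →
      {γ : Γ | (γ • K) ∩ L ≠ ∅}.Finite)
    (C₁ C₂ : Set X) (hC₁ : IsClosed C₁) (hC₂ : IsClosed C₂)
    (hcc₁ : ∃ K : Set X, IsCompact K ∧
      C₁ ⊆ ⋃ γ ∈ {γ : Γ | γ • C₁ = C₁}, γ • K)
    (hcc₂ : ∃ K : Set X, IsCompact K ∧
      C₂ ⊆ ⋃ γ ∈ {γ : Γ | γ • C₂ = C₂}, γ • K) :
    ∃ K : Set X, IsCompact K ∧
      C₁ ∩ C₂ ⊆ ⋃ γ ∈ {γ : Γ | γ • C₁ = C₁} ∩ {γ : Γ | γ • C₂ = C₂}, γ • K := by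
  classical
  obtain ⟨K₁, hK₁c, hK₁⟩ := hcc₁
  obtain ⟨K₂, hK₂c, hK₂⟩ := hcc₂
  have inv_stab : ∀ (g : Γ) (C : Set X), g • C = C → g⁻¹ • C = C := by
    intro g C h
    conv_lhs => rw [← h]
    exact inv_smul_smul g C
  set F : Set Γ := {g : Γ | (g • K₁) ∩ K₂ ≠ ∅} with hFdef
  have hF : F.Finite := hpd K₁ K₂ hK₁c hK₂c
  set P : Γ → Prop := fun δ =>
    ∃ η : Γ, η • C₂ = C₂ ∧ ∃ γ : Γ, γ • C₁ = C₁ ∧ η⁻¹ = δ * γ with hPdef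
  set e : Γ → Γ := fun δ => if h : P δ then h.choose else 1 with he
  refine ⟨⋃ δ ∈ F, e δ • K₂, ?_, ?_⟩
  · refine hF.isCompact_biUnion (fun δ _ => ?_)
    rw [← Set.image_smul]
    exact hK₂c.image (hcont (e δ))
  · rintro x ⟨hx1, hx2⟩
    obtain ⟨γ₁, hγ₁, hxK₁⟩ := Set.mem_iUnion₂.mp (hK₁ hx1)
    obtain ⟨η, hη, hxK₂⟩ := Set.mem_iUnion₂.mp (hK₂ hx2)
    have hmemK₁ : γ₁⁻¹ • x ∈ K₁ := by
      rwa [← Set.mem_smul_set_iff_inv_smul_mem]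
    have hmemK₂ : η⁻¹ • x ∈ K₂ := by
      rwa [← Set.mem_smul_set_iff_inv_smul_mem]
    set δ : Γ := η⁻¹ * γ₁ with hδ
    have hδF : δ ∈ F := by
      apply Set.nonempty_iff_ne_empty.mp
      refine ⟨η⁻¹ • x, ⟨γ₁⁻¹ • x, hmemK₁, ?_⟩, hmemK₂⟩
      show (η⁻¹ * γ₁) • (γ₁⁻¹ • x) = η⁻¹ • x
      rw [mul_smul, smul_inv_smul]
    have hPδ : P δ := ⟨η, hη, γ₁⁻¹, inv_stab γ₁ C₁ hγ₁, by rw [hδ]; group⟩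
    obtain ⟨hη₀, γ₀, hγ₀, hkey⟩ := hPδ.choose_spec
    have heδ : e δ = hPδ.choose := dif_pos hPδ
    set η₀ : Γ := hPδ.choose with hη₀def
    set g : Γ := η₀ * η⁻¹ with hg
    have hgeq : g = γ₀⁻¹ * γ₁⁻¹ := by
      have : η₀ = (δ * γ₀)⁻¹ := by rw [← hkey, inv_inv]
      rw [hg, this, hδ]
      group
    have hg1 : g • C₁ = C₁ := by
      rw [hgeq, mul_smul, inv_stab γ₁ C₁ hγ₁, inv_stab γ₀ C₁ hγ₀]
    have hg2 : g • C₂ = C₂ := by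
      rw [hg, mul_smul, inv_stab η C₂ hη, hη₀]
    have hgx : g • x ∈ ⋃ δ ∈ F, e δ • K₂ := by
      refine Set.mem_iUnion₂.mpr ⟨δ, hδF, ?_⟩
      rw [heδ, hg, mul_smul]
      exact Set.smul_mem_smul_set hmemK₂
    refine Set.mem_iUnion₂.mpr ⟨g⁻¹, ⟨inv_stab g C₁ hg1, inv_stab g C₂ hg2⟩, ?_⟩
    rw [Set.mem_smul_set_iff_inv_smul_mem, inv_inv]
    exact hgx
end
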